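/- arXiv:1711.00363 — 2 statements merged into one kernel-verified Lean document; each statement's English description precedes it below -/
import Mathlib

section
/- (Mixture Lemma, necessity.) Let D¹, D² be compatible finite-horizon POMDPs and let π be a full-memory policy that is Pareto-optimal for (D¹,D²). Then there exist weights w¹, w² ≥ 0 with w¹ + w² = 1 such that π maximizes the expected utility E_D[U;·] over all full-memory policies, where D = w¹D¹ + w²D² is the mixture POMDP. -/
open Finset

/-- A finitely-supported probability distribution, given as a nonnegative real-valued
function summing to `1`. -/
def IsDist {α : Type} [Fintype α] (p : α → ℝ) : Prop :=
  (∀ x, 0 ≤ p x) ∧ ∑ x, p x = 1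

/-- A finite-horizon POMDP with states `S`, actions `A`, observations `O` and horizon `n`:
an initial distribution `μ`, transition probabilities `T s a s'` = P(s'|s,a),
observation probabilities `Ω s o` = P(o|s), and a utility function `U` on state
trajectories (not assumed additive over time). -/
structure POMDP (S A O : Type) (n : ℕ) where
  μ : S → ℝ
  T : S → A → S → ℝ
  Ω : S → O → ℝ
  U : (Fin n → S) → ℝ

/-- The probabilistic data of a POMDP consists of genuine probability distributions. -/
def POMDP.Valid {S A O : Type} {n : ℕ} [Fintype S] [Fintype O] (D : POMDP S A O n) : Prop :=
  IsDist D.μ ∧ (∀ s a, IsDist (D.T s a)) ∧ ∀ s, IsDist (D.Ω s)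

/-- A history at (0-indexed) time `i`: observations `o₀, …, o_i` and actions `a₀, …, a_{i-1}`. -/
def Hist (O A : Type) (i : ℕ) : Type := (Fin (i + 1) → O) × (Fin i → A)

/-- A full-memory policy: at each time `i` it assigns to every history a distribution
on actions (given as a real-valued function). -/
def Policy (O A : Type) (n : ℕ) : Type := ∀ i : Fin n, Hist O A i.val → A → ℝ

/-- A full-memory policy is a genuine policy if every action "distribution" it outputs is
a probability distribution. -/
def IsPolicy {O A : Type} {n : ℕ} [Fintype A] (π : Policy O A n) : Prop :=
  ∀ (i : Fin n) (h : Hist O A i.val), IsDist (π i h)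

/-- The history at time `i` extracted from full observation and action sequences. -/
def histOf {O A : Type} {n : ℕ} (o : Fin n → O) (a : Fin n → A) (i : Fin n) :
    Hist O A i.val :=
  (fun k => o ⟨k.val, by have := k.isLt; have := i.isLt; omega⟩,
   fun k => a ⟨k.val, by have := k.isLt; have := i.isLt; omega⟩)

/-- The probability `P(s̄, ō, ā; π)` of a full trajectory under policy `π`:
`μ(s₁) ∏ᵢ Ω(oᵢ|sᵢ) πᵢ(aᵢ|hᵢ) ∏ᵢ T(sᵢ₊₁|sᵢ,aᵢ)`. -/
noncomputable def trajProb {S A O : Type} {n : ℕ} [NeZero n] (D : POMDP S A O n)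
    (π : Policy O A n) (s : Fin n → S) (o : Fin n → O) (a : Fin n → A) : ℝ :=
  D.μ (s 0) *
    (∏ i : Fin n, D.Ω (s i) (o i) * π i (histOf o a i) (a i)) *
    ∏ i : Fin (n - 1),
      D.T (s ⟨i.val, by have := i.isLt; omega⟩) (a ⟨i.val, by have := i.isLt; omega⟩)
        (s ⟨i.val + 1, by have := i.isLt; omega⟩)

/-- The expected utility `E[U; π]` of a policy `π` in the POMDP `D`. -/
noncomputable def expUtil {S A O : Type} {n : ℕ} [Fintype S] [Fintype A] [Fintype O]
    [NeZero n] (D : POMDP S A O n) (π : Policy O A n) : ℝ :=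
  ∑ s : Fin n → S, ∑ o : Fin n → O, ∑ a : Fin n → A, trajProb D π s o a * D.U s

/-- A full-memory policy `π` is Pareto-optimal for the pair `(D1, D2)` of compatible POMDPs
if no other policy can improve one principal's expected utility without strictly
decreasing the other's. -/
def ParetoOptimal {S1 S2 A O : Type} {n : ℕ} [Fintype S1] [Fintype S2] [Fintype A]
    [Fintype O] [NeZero n] (D1 : POMDP S1 A O n) (D2 : POMDP S2 A O n)
    (π : Policy O A n) : Prop :=
  ∀ π' : Policy O A n, IsPolicy π' →
    (expUtil D1 π' > expUtil D1 π → expUtil D1 π' < expUtil D1 π ∨ expUtil D2 π' < expUtil D2 π) ∧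
    (expUtil D2 π' > expUtil D2 π → expUtil D1 π' < expUtil D1 π ∨ expUtil D2 π' < expUtil D2 π)

/-- The mixture POMDP `w1 • D1 + w2 • D2`: flip a `(w1, w2)`-weighted coin `B ∈ {1,2}`,
then run `D^B` forever after.  Its states are pairs `(j, s)` (encoded as `S1 ⊕ S2`),
the coin's value never changes, and the utility of a trajectory whose component is
constantly `j` is `U^j` of its `S^j`-components. -/
noncomputable def POMDP.mix {S1 S2 A O : Type} {n : ℕ} [Nonempty S1] [Nonempty S2] [NeZero n]
    (w1 w2 : ℝ) (D1 : POMDP S1 A O n) (D2 : POMDP S2 A O n) : POMDP (S1 ⊕ S2) A O n where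
  μ := fun js => match js with
    | .inl s => w1 * D1.μ s
    | .inr s => w2 * D2.μ s
  T := fun js a js' => match js, js' with
    | .inl s, .inl s' => D1.T s a s'
    | .inr s, .inr s' => D2.T s a s'
    | .inl _, .inr _ => 0
    | .inr _, .inl _ => 0
  Ω := fun js o => match js with
    | .inl s => D1.Ω s o
    | .inr s => D2.Ω s o
  U := fun sb => match sb 0 with
    | .inl _ => D1.U fun i => match sb i with
        | .inl s => s
        | .inr _ => Classical.arbitrary S1
    | .inr _ => D2.U fun i => match sb i with
        | .inr s => s
        | .inl _ => Classical.arbitrary S2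

/-- `P(o_{≤i} | Do(a_{<i}))`: the probability of the observations in the history `h`,
causally conditioned on its actions. -/
noncomputable def doProb {S A O : Type} {n : ℕ} [Fintype S] (D : POMDP S A O n)
    (i : Fin n) (h : Hist O A i.val) : ℝ :=
  ∑ s : Fin (i.val + 1) → S,
    D.μ (s 0) * (∏ k : Fin (i.val + 1), D.Ω (s k) (h.1 k)) *
      ∏ k : Fin i.val, D.T (s k.castSucc) (h.2 k) (s k.succ)

/-- `(o, a)` extends the history `h` at time `i` if they agree with its recorded
observations and actions. -/
def ExtendsHist {O A : Type} {n : ℕ} (i : Fin n) (h : Hist O A i.val)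
    (o : Fin n → O) (a : Fin n → A) : Prop :=
  (∀ k : Fin (i.val + 1), o ⟨k.val, by have := k.isLt; have := i.isLt; omega⟩ = h.1 k) ∧
  (∀ k : Fin i.val, a ⟨k.val, by have := k.isLt; have := i.isLt; omega⟩ = h.2 k)

instance {O A : Type} {n : ℕ} [DecidableEq O] [DecidableEq A] (i : Fin n)
    (h : Hist O A i.val) (o : Fin n → O) (a : Fin n → A) :
    Decidable (ExtendsHist i h o a) := by
  unfold ExtendsHist; infer_instance

/-- The do-weighted value `W_D^π(α, hᵢ)`: the sum over all trajectories extending the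
history `hᵢ` of `μ(s₁) ⬝ ∏_{k≤i} Ω(o_k|s_k) ⬝ α(aᵢ) ⬝ ∏_{k>i} Ω(o_k|s_k) π_k(a_k|h_k) ⬝
∏_k T(s_{k+1}|s_k,a_k) ⬝ U(s̄)`; it equals `P(o_{≤i}|Do(a_{<i}))` times the conditional
expected utility given `hᵢ` when `aᵢ ∼ α` and later actions follow `π`. -/
noncomputable def doVal {S A O : Type} {n : ℕ} [Fintype S] [Fintype A] [Fintype O]
    [DecidableEq O] [DecidableEq A] [NeZero n] (D : POMDP S A O n) (π : Policy O A n)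
    (i : Fin n) (h : Hist O A i.val) (α : A → ℝ) : ℝ :=
  ∑ s : Fin n → S, ∑ o : Fin n → O, ∑ a : Fin n → A,
    if ExtendsHist i h o a then
      D.μ (s 0) *
        (∏ k : Fin (i.val + 1),
          D.Ω (s ⟨k.val, by have := k.isLt; have := i.isLt; omega⟩)
            (o ⟨k.val, by have := k.isLt; have := i.isLt; omega⟩)) *
        α (a i) *
        (∏ k ∈ univ.filter (fun k : Fin n => i < k), D.Ω (s k) (o k) * π k (histOf o a k) (a k)) *
        (∏ k : Fin (n - 1),
          D.T (s ⟨k.val, by have := k.isLt; omega⟩) (a ⟨k.val, by have := k.isLt; omega⟩)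
            (s ⟨k.val + 1, by have := k.isLt; omega⟩)) *
        D.U s
    else 0

/-- The truncation of a history at time `i` to the (earlier) time `k < i`. -/
def truncHist {O A : Type} {n : ℕ} (i : Fin n) (h : Hist O A i.val) (k : Fin i.val) :
    Hist O A k.val :=
  (fun m => h.1 ⟨m.val, by have := m.isLt; have := k.isLt; omega⟩,
   fun m => h.2 ⟨m.val, by have := m.isLt; have := k.isLt; omega⟩)

/-- `P(hᵢ; π)`: the probability of the history `hᵢ` under the policy `π` in `D`. -/
noncomputable def histProb {S A O : Type} {n : ℕ} [Fintype S] (D : POMDP S A O n)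
    (π : Policy O A n) (i : Fin n) (h : Hist O A i.val) : ℝ :=
  ∑ s : Fin (i.val + 1) → S,
    D.μ (s 0) * (∏ k : Fin (i.val + 1), D.Ω (s k) (h.1 k)) *
      (∏ k : Fin i.val,
        π ⟨k.val, by have := k.isLt; have := i.isLt; omega⟩ (truncHist i h k) (h.2 k)) *
      ∏ k : Fin i.val, D.T (s k.castSucc) (h.2 k) (s k.succ)
/- ===== auxiliary lemmas ===== -/

section Aux

/-- The policy-weight of a history: the product of the policy probabilities of its actions. -/
noncomputable def polWeight {O A : Type} {n : ℕ} (π : Policy O A n) (i : Fin n)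
    (h : Hist O A i.val) : ℝ :=
  ∏ k : Fin i.val, π ⟨k.val, k.isLt.trans i.isLt⟩ (truncHist i h k) (h.2 k)

/-- Mixture of two policies implementing the convex combination of trajectory
distributions. -/
noncomputable def mixPolicy {O A : Type} {n : ℕ} (t : ℝ) (π1 π2 : Policy O A n) :
    Policy O A n :=
  fun i h a =>
    if t * polWeight π1 i h + (1 - t) * polWeight π2 i h = 0 then π1 i h a
    else (t * polWeight π1 i h * π1 i h a + (1 - t) * polWeight π2 i h * π2 i h a) /
      (t * polWeight π1 i h + (1 - t) * polWeight π2 i h)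

lemma polWeight_nonneg {O A : Type} {n : ℕ} [Fintype A] {π : Policy O A n}
    (hπ : IsPolicy π) (i : Fin n) (h : Hist O A i.val) : 0 ≤ polWeight π i h :=
  Finset.prod_nonneg fun k _ => (hπ _ _).1 _

lemma mixPolicy_isPolicy {O A : Type} {n : ℕ} [Fintype A] {t : ℝ} {π1 π2 : Policy O A n}
    (ht0 : 0 ≤ t) (ht1 : t ≤ 1) (h1 : IsPolicy π1) (h2 : IsPolicy π2) :
    IsPolicy (mixPolicy t π1 π2) := by
  intro i h
  have hQ1 := polWeight_nonneg h1 i h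
  have hQ2 := polWeight_nonneg h2 i h
  have hd0 : 0 ≤ t * polWeight π1 i h + (1 - t) * polWeight π2 i h :=
    add_nonneg (mul_nonneg ht0 hQ1) (mul_nonneg (by linarith) hQ2)
  constructor
  · intro a
    unfold mixPolicy
    split
    · exact (h1 i h).1 a
    · apply div_nonneg
      · have ha1 := (h1 i h).1 a; have ha2 := (h2 i h).1 a
        exact add_nonneg (mul_nonneg (mul_nonneg ht0 hQ1) ha1)
          (mul_nonneg (mul_nonneg (by linarith) hQ2) ha2)
      · exact hd0
  · unfold mixPolicy
    by_cases hd : t * polWeight π1 i h + (1 - t) * polWeight π2 i h = 0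
    · simp only [hd, if_pos]
      simpa using (h1 i h).2
    · simp only [hd, if_neg, if_false]
      rw [← Finset.sum_div, Finset.sum_add_distrib, ← Finset.mul_sum, ← Finset.mul_sum,
        (h1 i h).2, (h2 i h).2, mul_one, mul_one, div_self hd]

/-- partial products of policy probabilities along a trajectory -/
noncomputable def aprod {O A : Type} {n : ℕ} (π : Policy O A n) (o : Fin n → O)
    (a : Fin n → A) (m : ℕ) : ℝ :=
  ∏ i ∈ Finset.univ.filter (fun i : Fin n => i.val < m), π i (histOf o a i) (a i)

lemma aprod_zero {O A : Type} {n : ℕ} (π : Policy O A n) (o : Fin n → O) (a : Fin n → A) :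
    aprod π o a 0 = 1 := by
  unfold aprod; simp

lemma aprod_succ {O A : Type} {n : ℕ} (π : Policy O A n) (o : Fin n → O) (a : Fin n → A)
    (m : ℕ) (hm : m < n) :
    aprod π o a (m + 1) =
      aprod π o a m * π ⟨m, hm⟩ (histOf o a ⟨m, hm⟩) (a ⟨m, hm⟩) := by
  unfold aprod
  have hset : Finset.univ.filter (fun i : Fin n => i.val < m + 1) =
      insert (⟨m, hm⟩ : Fin n) (Finset.univ.filter (fun i : Fin n => i.val < m)) := by
    ext i
    simp only [Finset.mem_filter, Finset.mem_univ, true_and, Finset.mem_insert, Fin.ext_iff]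
    omega
  rw [hset, Finset.prod_insert (by simp)]
  ring

lemma aprod_top {O A : Type} {n : ℕ} (π : Policy O A n) (o : Fin n → O) (a : Fin n → A) :
    aprod π o a n = ∏ i : Fin n, π i (histOf o a i) (a i) := by
  unfold aprod
  rw [Finset.filter_true_of_mem (fun i _ => i.isLt)]

lemma aprod_nonneg {O A : Type} {n : ℕ} [Fintype A] {π : Policy O A n}
    (hπ : IsPolicy π) (o : Fin n → O) (a : Fin n → A) (m : ℕ) : 0 ≤ aprod π o a m :=
  Finset.prod_nonneg fun i _ => (hπ _ _).1 _

lemma polWeight_histOf {O A : Type} {n : ℕ} (π : Policy O A n) (o : Fin n → O)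
    (a : Fin n → A) (i : Fin n) :
    polWeight π i (histOf o a i) = aprod π o a i.val := by
  unfold polWeight aprod
  refine Finset.prod_bij' (fun k _ => (⟨k.val, k.isLt.trans i.isLt⟩ : Fin n))
    (fun k hk => (⟨k.val, (Finset.mem_filter.mp hk).2⟩ : Fin i.val)) ?_ ?_ ?_ ?_ ?_
  · intro k _
    simp only [Finset.mem_filter, Finset.mem_univ, true_and]
    exact k.isLt
  · intro k _; simp
  · intro k _; rfl
  · intro k _; rfl
  · intro k _; rfl

end Aux
section Aux2

variable {O A : Type} {n : ℕ} [Fintype A]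

lemma aprod_mix {t : ℝ} {π1 π2 : Policy O A n} (ht0 : 0 ≤ t) (ht1 : t ≤ 1)
    (h1 : IsPolicy π1) (h2 : IsPolicy π2) (o : Fin n → O) (a : Fin n → A) :
    ∀ m, m ≤ n →
      aprod (mixPolicy t π1 π2) o a m = t * aprod π1 o a m + (1 - t) * aprod π2 o a m := by
  intro m
  induction m with
  | zero => intro _; simp [aprod_zero]
  | succ m ih =>
    intro hm
    have hmn : m < n := hm
    rw [aprod_succ _ _ _ m hmn, aprod_succ _ _ _ m hmn, aprod_succ _ _ _ m hmn,
      ih (le_of_lt hmn)]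
    have hQ1 : polWeight π1 ⟨m, hmn⟩ (histOf o a ⟨m, hmn⟩) = aprod π1 o a m :=
      polWeight_histOf π1 o a ⟨m, hmn⟩
    have hQ2 : polWeight π2 ⟨m, hmn⟩ (histOf o a ⟨m, hmn⟩) = aprod π2 o a m :=
      polWeight_histOf π2 o a ⟨m, hmn⟩
    unfold mixPolicy
    rw [hQ1, hQ2]
    by_cases hd : t * aprod π1 o a m + (1 - t) * aprod π2 o a m = 0
    · rw [if_pos hd, hd]
      have e1 : t * aprod π1 o a m = 0 ∧ (1 - t) * aprod π2 o a m = 0 := by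
        constructor <;>
          nlinarith [aprod_nonneg h1 o a m, aprod_nonneg h2 o a m,
            mul_nonneg ht0 (aprod_nonneg h1 o a m),
            mul_nonneg (by linarith : (0:ℝ) ≤ 1 - t) (aprod_nonneg h2 o a m)]
      calc 0 * π1 ⟨m, hmn⟩ (histOf o a ⟨m, hmn⟩) (a ⟨m, hmn⟩) = 0 := by ring
        _ = (t * aprod π1 o a m) * π1 ⟨m, hmn⟩ (histOf o a ⟨m, hmn⟩) (a ⟨m, hmn⟩)
            + ((1 - t) * aprod π2 o a m) * π2 ⟨m, hmn⟩ (histOf o a ⟨m, hmn⟩) (a ⟨m, hmn⟩) := by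
          rw [e1.1, e1.2]; ring
        _ = _ := by ring
    · rw [if_neg hd]
      field_simp
end Aux2
section Aux3

lemma expUtil_mixPolicy {S A O : Type} {n : ℕ} [Fintype S] [Fintype A] [Fintype O]
    [NeZero n] (D : POMDP S A O n) {t : ℝ} {π1 π2 : Policy O A n}
    (ht0 : 0 ≤ t) (ht1 : t ≤ 1) (h1 : IsPolicy π1) (h2 : IsPolicy π2) :
    expUtil D (mixPolicy t π1 π2) = t * expUtil D π1 + (1 - t) * expUtil D π2 := by
  unfold expUtil
  have key : ∀ (s : Fin n → S) (o : Fin n → O) (a : Fin n → A),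
      trajProb D (mixPolicy t π1 π2) s o a * D.U s =
        t * (trajProb D π1 s o a * D.U s) + (1 - t) * (trajProb D π2 s o a * D.U s) := by
    intro s o a
    have hp : (∏ i : Fin n, mixPolicy t π1 π2 i (histOf o a i) (a i)) =
        t * (∏ i : Fin n, π1 i (histOf o a i) (a i))
          + (1 - t) * (∏ i : Fin n, π2 i (histOf o a i) (a i)) := by
      rw [← aprod_top, ← aprod_top, ← aprod_top]
      exact aprod_mix ht0 ht1 h1 h2 o a n le_rfl
    unfold trajProb
    rw [Finset.prod_mul_distrib, Finset.prod_mul_distrib, Finset.prod_mul_distrib, hp]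
    ring
  calc (∑ s : Fin n → S, ∑ o : Fin n → O, ∑ a : Fin n → A,
        trajProb D (mixPolicy t π1 π2) s o a * D.U s)
      = ∑ s : Fin n → S, ∑ o : Fin n → O, ∑ a : Fin n → A,
          (t * (trajProb D π1 s o a * D.U s) + (1 - t) * (trajProb D π2 s o a * D.U s)) := by
        exact Finset.sum_congr rfl fun s _ => Finset.sum_congr rfl fun o _ =>
          Finset.sum_congr rfl fun a _ => key s o a
    _ = _ := by
        simp only [Finset.sum_add_distrib, ← Finset.mul_sum]

end Aux3
section Aux4

variable {S1 S2 A O : Type} [Fintype S1] [Fintype S2] [Fintype A] [Fintype O]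
  [Nonempty S1] [Nonempty S2] {n : ℕ} [NeZero n]

lemma sum_inl_getLeft {α β : Type} (x : α ⊕ β) (h : x.isLeft) :
    Sum.inl (x.getLeft h) = x := by
  cases x with
  | inl a => rfl
  | inr b => simp at h

lemma sum_inr_getRight {α β : Type} (x : α ⊕ β) (h : x.isRight) :
    Sum.inr (x.getRight h) = x := by
  cases x with
  | inl a => simp at h
  | inr b => rfl

lemma trajProb_mix_inl (w1 w2 : ℝ) (D1 : POMDP S1 A O n) (D2 : POMDP S2 A O n)
    (π : Policy O A n) (s1 : Fin n → S1) (o : Fin n → O) (a : Fin n → A) :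
    trajProb (POMDP.mix w1 w2 D1 D2) π (fun i => Sum.inl (s1 i)) o a =
      w1 * trajProb D1 π s1 o a := by
  unfold trajProb POMDP.mix
  simp only
  ring

lemma trajProb_mix_inr (w1 w2 : ℝ) (D1 : POMDP S1 A O n) (D2 : POMDP S2 A O n)
    (π : Policy O A n) (s2 : Fin n → S2) (o : Fin n → O) (a : Fin n → A) :
    trajProb (POMDP.mix w1 w2 D1 D2) π (fun i => Sum.inr (s2 i)) o a =
      w2 * trajProb D2 π s2 o a := by
  unfold trajProb POMDP.mix
  simp only
  ring

lemma mixU_inl (w1 w2 : ℝ) (D1 : POMDP S1 A O n) (D2 : POMDP S2 A O n) (s1 : Fin n → S1) :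
    (POMDP.mix w1 w2 D1 D2).U (fun i => Sum.inl (s1 i)) = D1.U s1 := rfl

lemma mixU_inr (w1 w2 : ℝ) (D1 : POMDP S1 A O n) (D2 : POMDP S2 A O n) (s2 : Fin n → S2) :
    (POMDP.mix w1 w2 D1 D2).U (fun i => Sum.inr (s2 i)) = D2.U s2 := rfl

/-- if the T-product in the mixture is nonzero, the component is constant -/
lemma mix_comp_const (w1 w2 : ℝ) (D1 : POMDP S1 A O n) (D2 : POMDP S2 A O n)
    (s : Fin n → S1 ⊕ S2) (a : Fin n → A)
    (hT : ∀ (k : ℕ) (hk1 : k < n) (hk2 : k + 1 < n),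
      (POMDP.mix w1 w2 D1 D2).T (s ⟨k, hk1⟩) (a ⟨k, hk1⟩) (s ⟨k + 1, hk2⟩) ≠ 0) :
    ∀ i : Fin n, (s i).isLeft = (s 0).isLeft := by
  have H : ∀ (m : ℕ) (hm : m < n), (s ⟨m, hm⟩).isLeft = (s 0).isLeft := by
    intro m
    induction m with
    | zero =>
      intro hm
      have : (⟨0, hm⟩ : Fin n) = 0 := Fin.ext (by simp)
      rw [this]
    | succ m ih =>
      intro hm
      have hm' : m < n := by omega
      rw [← ih hm']
      have hne := hT m hm' hm
      rcases hsm : s ⟨m, hm'⟩ with x | x <;> rcases hsm1 : s ⟨m + 1, hm⟩ with y | y <;>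
        rw [hsm, hsm1] at hne <;> simp only [POMDP.mix] at hne <;> simp_all
  intro i
  have : i = ⟨i.val, i.isLt⟩ := rfl
  rw [this]
  exact H i.val i.isLt

lemma trajProb_mix_mixed (w1 w2 : ℝ) (D1 : POMDP S1 A O n) (D2 : POMDP S2 A O n)
    (π : Policy O A n) (s : Fin n → S1 ⊕ S2) (o : Fin n → O) (a : Fin n → A)
    (hmix : ¬ ∀ i : Fin n, (s i).isLeft = (s 0).isLeft) :
    trajProb (POMDP.mix w1 w2 D1 D2) π s o a = 0 := by
  by_contra hne
  apply hmix
  apply mix_comp_const w1 w2 D1 D2 s a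
  intro k hk1 hk2
  have hprod : (∏ i : Fin (n - 1),
      (POMDP.mix w1 w2 D1 D2).T (s ⟨i.val, by omega⟩) (a ⟨i.val, by omega⟩)
        (s ⟨i.val + 1, by omega⟩)) ≠ 0 := by
    intro h0
    apply hne
    unfold trajProb
    rw [h0]
    ring
  have hk : k < n - 1 := by omega
  have := Finset.prod_ne_zero_iff.mp hprod ⟨k, hk⟩ (Finset.mem_univ _)
  exact this

lemma expUtil_mix (w1 w2 : ℝ) (D1 : POMDP S1 A O n) (D2 : POMDP S2 A O n)
    (π : Policy O A n) :
    expUtil (POMDP.mix w1 w2 D1 D2) π = w1 * expUtil D1 π + w2 * expUtil D2 π := by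
  classical
  set D := POMDP.mix w1 w2 D1 D2 with hD
  set F : (Fin n → S1 ⊕ S2) → ℝ :=
    fun s => ∑ o : Fin n → O, ∑ a : Fin n → A, trajProb D π s o a * D.U s with hF
  have hEU : expUtil D π = ∑ s : Fin n → S1 ⊕ S2, F s := rfl
  set L : Finset (Fin n → S1 ⊕ S2) :=
    Finset.univ.filter (fun s => ∀ i, (s i).isLeft = true) with hL
  set R : Finset (Fin n → S1 ⊕ S2) :=
    Finset.univ.filter (fun s => ∀ i, (s i).isLeft = false) with hR
  have hzero : ∀ s ∈ Finset.univ, s ∉ L ∪ R → F s = 0 := by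
    intro s _ hs
    simp only [hL, hR, Finset.mem_union, Finset.mem_filter, Finset.mem_univ, true_and,
      not_or, not_forall] at hs
    obtain ⟨⟨i, hi⟩, ⟨j, hj⟩⟩ := hs
    have hmixed : ¬ ∀ i : Fin n, (s i).isLeft = (s 0).isLeft := by
      intro hc
      cases h0 : (s 0).isLeft
      · exact hj ((hc j).trans h0)
      · exact hi ((hc i).trans h0)
    refine Finset.sum_eq_zero fun o _ => Finset.sum_eq_zero fun a _ => ?_
    rw [trajProb_mix_mixed w1 w2 D1 D2 π s o a hmixed, zero_mul]
  have hdisj : Disjoint L R := by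
    rw [Finset.disjoint_left]
    intro s hsL hsR
    simp only [hL, hR, Finset.mem_filter, Finset.mem_univ, true_and] at hsL hsR
    have h1 := hsL 0
    have h2 := hsR 0
    rw [h1] at h2
    exact Bool.true_eq_false.mp h2
  have hsplit : expUtil D π = ∑ s ∈ L, F s + ∑ s ∈ R, F s := by
    rw [hEU, ← Finset.sum_union hdisj]
    exact (Finset.sum_subset (Finset.subset_univ _) hzero).symm
  have hLsum : ∑ s ∈ L, F s = w1 * expUtil D1 π := by
    rw [show w1 * expUtil D1 π = ∑ s1 : Fin n → S1,
        ∑ o : Fin n → O, ∑ a : Fin n → A, w1 * (trajProb D1 π s1 o a * D1.U s1) by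
      unfold expUtil; rw [Finset.mul_sum]; refine Finset.sum_congr rfl fun s1 _ => ?_
      rw [Finset.mul_sum]; refine Finset.sum_congr rfl fun o _ => ?_
      rw [Finset.mul_sum]]
    refine Finset.sum_bij' (fun s hs => fun i => (s i).getLeft ?_)
      (fun s1 _ => fun i => Sum.inl (s1 i)) ?_ ?_ ?_ ?_ ?_
    · simp only [hL, Finset.mem_filter, Finset.mem_univ, true_and] at hs
      exact hs i
    · intro s hs; exact Finset.mem_univ _
    · intro s1 _
      simp only [hL, Finset.mem_filter, Finset.mem_univ, true_and]
      intro i; rfl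
    · intro s hs
      funext i
      simp only [hL, Finset.mem_filter, Finset.mem_univ, true_and] at hs
      exact sum_inl_getLeft (s i) (hs i)
    · intro s1 _; rfl
    · intro s hs
      simp only [hL, Finset.mem_filter, Finset.mem_univ, true_and] at hs
      have hrepr : s = fun i => Sum.inl ((s i).getLeft (hs i)) := by
        funext i
        exact (sum_inl_getLeft (s i) (hs i)).symm
      refine Finset.sum_congr rfl fun o _ => Finset.sum_congr rfl fun a _ => ?_
      conv_lhs => rw [hrepr]
      rw [hD, trajProb_mix_inl, mixU_inl]
      ring
  have hRsum : ∑ s ∈ R, F s = w2 * expUtil D2 π := by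
    rw [show w2 * expUtil D2 π = ∑ s2 : Fin n → S2,
        ∑ o : Fin n → O, ∑ a : Fin n → A, w2 * (trajProb D2 π s2 o a * D2.U s2) by
      unfold expUtil; rw [Finset.mul_sum]; refine Finset.sum_congr rfl fun s2 _ => ?_
      rw [Finset.mul_sum]; refine Finset.sum_congr rfl fun o _ => ?_
      rw [Finset.mul_sum]]
    refine Finset.sum_bij' (fun s hs => fun i => (s i).getRight ?_)
      (fun s2 _ => fun i => Sum.inr (s2 i)) ?_ ?_ ?_ ?_ ?_
    · simp only [hR, Finset.mem_filter, Finset.mem_univ, true_and] at hs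
      have := hs i
      cases hsc : s i with
      | inl x => simp_all
      | inr x => rfl
    · intro s hs; exact Finset.mem_univ _
    · intro s2 _
      simp only [hR, Finset.mem_filter, Finset.mem_univ, true_and]
      intro i; rfl
    · intro s hs
      funext i
      simp only [hR, Finset.mem_filter, Finset.mem_univ, true_and] at hs
      refine sum_inr_getRight (s i) ?_
    · intro s2 _; rfl
    · intro s hs
      simp only [hR, Finset.mem_filter, Finset.mem_univ, true_and] at hs
      have hright : ∀ i, (s i).isRight := by
        intro i
        have := hs i
        cases hsc : s i with
        | inl x => simp_all
        | inr x => rfl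
      have hrepr : s = fun i => Sum.inr ((s i).getRight (hright i)) := by
        funext i
        exact (sum_inr_getRight (s i) (hright i)).symm
      refine Finset.sum_congr rfl fun o _ => Finset.sum_congr rfl fun a _ => ?_
      conv_lhs => rw [hrepr]
      rw [hD, trajProb_mix_inr, mixU_inr]
      ring
  rw [hsplit, hLsum, hRsum]

end Aux4

/-- Mixture Lemma, necessity: if a full-memory policy `π` is Pareto-optimal for the pair
`(D1, D2)` of compatible POMDPs, then there exist weights `w1, w2 ≥ 0` with `w1 + w2 = 1`
such that `π` maximizes expected utility in the mixture POMDP `w1•D1 + w2•D2` over all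
full-memory policies. -/
theorem paretoOptimal_exists_mix_optimal
    {S1 S2 A O : Type} [Fintype S1] [Fintype S2] [Fintype A] [Fintype O]
    [Nonempty S1] [Nonempty S2] [Nonempty A] [Nonempty O] {n : ℕ} [NeZero n]
    (D1 : POMDP S1 A O n) (D2 : POMDP S2 A O n) (hD1 : D1.Valid) (hD2 : D2.Valid)
    (π : Policy O A n) (hπ : IsPolicy π) (hpar : ParetoOptimal D1 D2 π) :
    ∃ w1 w2 : ℝ, 0 ≤ w1 ∧ 0 ≤ w2 ∧ w1 + w2 = 1 ∧
      ∀ π' : Policy O A n, IsPolicy π' →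
        expUtil (POMDP.mix w1 w2 D1 D2) π' ≤ expUtil (POMDP.mix w1 w2 D1 D2) π := by
  classical
  set x : Policy O A n → ℝ := fun π' => expUtil D1 π' - expUtil D1 π with hx
  set y : Policy O A n → ℝ := fun π' => expUtil D2 π' - expUtil D2 π with hy
  -- Pareto consequences
  have hP : ∀ π', IsPolicy π' → 0 < x π' → y π' < 0 := by
    intro π' hpol hxp
    have h := (hpar π' hpol).1 (by simp only [hx] at hxp; linarith)
    rcases h with h | h
    · exfalso; simp only [hx] at hxp; linarith
    · simp only [hy]; linarith
  have hQ : ∀ π', IsPolicy π' → 0 < y π' → x π' < 0 := by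
    intro π' hpol hyp
    have h := (hpar π' hpol).2 (by simp only [hy] at hyp; linarith)
    rcases h with h | h
    · simp only [hx]; linarith
    · exfalso; simp only [hy] at hyp; linarith
  -- convexity: mixtures of policies realize convex combinations of (x, y)
  have hconv : ∀ π1' π2', IsPolicy π1' → IsPolicy π2' → ∀ t : ℝ, 0 ≤ t → t ≤ 1 →
      IsPolicy (mixPolicy t π1' π2') ∧
      x (mixPolicy t π1' π2') = t * x π1' + (1 - t) * x π2' ∧
      y (mixPolicy t π1' π2') = t * y π1' + (1 - t) * y π2' := by
    intro π1' π2' h1 h2 t ht0 ht1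
    refine ⟨mixPolicy_isPolicy ht0 ht1 h1 h2, ?_, ?_⟩
    · simp only [hx]
      rw [expUtil_mixPolicy D1 ht0 ht1 h1 h2]; ring
    · simp only [hy]
      rw [expUtil_mixPolicy D2 ht0 ht1 h1 h2]; ring
  -- key pairwise inequality
  have hkey : ∀ π1' π2', IsPolicy π1' → IsPolicy π2' →
      0 < y π1' → 0 < x π2' → x π2' * y π1' ≤ x π1' * y π2' := by
    intro π1' π2' h1 h2 hy1 hx2
    have hx1 : x π1' < 0 := hQ π1' h1 hy1
    have hy2 : y π2' < 0 := hP π2' h2 hx2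
    by_contra hcon
    push_neg at hcon
    set t : ℝ := x π2' / (x π2' - x π1') with hts
    have hden : 0 < x π2' - x π1' := by linarith
    have ht0 : 0 ≤ t := le_of_lt (div_pos hx2 hden)
    have ht1 : t ≤ 1 := by
      rw [div_le_one hden]; linarith
    obtain ⟨hpol3, hx3, hy3⟩ := hconv π1' π2' h1 h2 t ht0 ht1
    have hx3z : x (mixPolicy t π1' π2') = 0 := by
      rw [hx3, hts]; field_simp; ring
    have hy3p : 0 < y (mixPolicy t π1' π2') := by
      rw [hy3, hts]
      have : x π2' / (x π2' - x π1') * y π1' +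
          (1 - x π2' / (x π2' - x π1')) * y π2' =
          (x π2' * y π1' - x π1' * y π2') / (x π2' - x π1') := by
        field_simp; ring
      rw [this]
      apply div_pos _ hden
      linarith
    have := hQ _ hpol3 hy3p
    rw [hx3z] at this
    exact absurd this (by norm_num)
  -- the weight
  set W : Set ℝ := {r : ℝ | r = 0 ∨ ∃ π', IsPolicy π' ∧ 0 < y π' ∧
    r = y π' / (y π' - x π')} with hW
  have hWne : W.Nonempty := ⟨0, Or.inl rfl⟩
  have hW1 : ∀ r ∈ W, r ≤ 1 := by
    rintro r (rfl | ⟨π', hpol, hyp, rfl⟩)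
    · norm_num
    · have hxn : x π' < 0 := hQ π' hpol hyp
      have hden : 0 < y π' - x π' := by linarith
      rw [div_le_one hden]; linarith
  have hbdd : BddAbove W := ⟨1, hW1⟩
  set w : ℝ := sSup W with hw
  have hw0 : 0 ≤ w := le_csSup hbdd (Or.inl rfl)
  have hw1 : w ≤ 1 := csSup_le hWne hW1
  -- main inequality
  have hmain : ∀ π', IsPolicy π' → w * x π' + (1 - w) * y π' ≤ 0 := by
    intro π' hpol
    rcases lt_or_ge 0 (y π') with hyp | hyn
    · -- y > 0, so x < 0 and w ≥ y/(y-x)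
      have hxn : x π' < 0 := hQ π' hpol hyp
      have hden : 0 < y π' - x π' := by linarith
      have hge : y π' / (y π' - x π') ≤ w :=
        le_csSup hbdd (Or.inr ⟨π', hpol, hyp, rfl⟩)
      rw [div_le_iff₀ hden] at hge
      nlinarith
    · rcases lt_or_ge 0 (x π') with hxp | hxn
      · -- x > 0, so y < 0 and w ≤ y/(y-x)
        have hyp : y π' < 0 := hP π' hpol hxp
        have hden : y π' - x π' < 0 := by linarith
        have hub : w ≤ y π' / (y π' - x π') := by
          apply csSup_le hWne
          have hden2 : 0 < x π' - y π' := by linarith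
          have hrw : y π' / (y π' - x π') = (-y π') / (x π' - y π') := by
            rw [show y π' - x π' = -(x π' - y π') by ring, div_neg, ← neg_div]
          rintro r (rfl | ⟨π1', hpol1, hy1, rfl⟩)
          · rw [hrw]
            exact div_nonneg (by linarith) (le_of_lt hden2)
          · -- y1/(y1-x1) ≤ y2/(y2-x2)
            have hx1 : x π1' < 0 := hQ π1' hpol1 hy1
            have hden1 : 0 < y π1' - x π1' := by linarith
            have hk := hkey π1' π' hpol1 hpol hy1 hxp
            rw [hrw, div_le_div_iff₀ hden1 hden2]
            nlinarith
        have hden2 : 0 < x π' - y π' := by linarith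
        rw [show y π' / (y π' - x π') = (-y π') / (x π' - y π') by
          rw [show y π' - x π' = -(x π' - y π') by ring, div_neg, ← neg_div],
          le_div_iff₀ hden2] at hub
        nlinarith
      · nlinarith [mul_nonneg hw0 (neg_nonneg.2 hxn),
          mul_nonneg (by linarith : (0:ℝ) ≤ 1 - w) (neg_nonneg.2 hyn)]
  refine ⟨w, 1 - w, hw0, by linarith, by ring, ?_⟩
  intro π' hpol
  rw [expUtil_mix, expUtil_mix]
  have h := hmain π' hpol
  simp only [hx, hy] at h
  nlinarith
end

section
/- (Pareto-optimal control theorem, sufficiency.) Let D¹, D² be compatible finite-horizon POMDPs, let w¹, w² > 0 with w¹ + w² = 1, and suppose the full-memory policy π satisfies, for every time i ∈ {1,…,n} and every history hᵢ ∈ Oⁱ × A^{i−1}, that πᵢ(−|hᵢ) maximizes α ↦ w¹·W_{D¹}^π(α,hᵢ) + w²·W_{D²}^π(α,hᵢ) over all α ∈ Δ(A). Then π is Pareto-optimal for (D¹,D²). -/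
open Finset

section Aux

private instance histFintype {O A : Type} [Fintype O] [Fintype A] {i : ℕ} :
    Fintype (Hist O A i) := by unfold Hist; infer_instance

private instance histDecEq {O A : Type} [DecidableEq O] [DecidableEq A] {i : ℕ} :
    DecidableEq (Hist O A i) := by unfold Hist; infer_instance

private lemma prod_fin_cast {n m : ℕ} (hmn : m ≤ n) (g : Fin n → ℝ) (f : Fin m → ℝ)
    (hfg : ∀ k : Fin m, f k = g ⟨k.val, lt_of_lt_of_le k.isLt hmn⟩) :
    ∏ k : Fin m, f k = ∏ k ∈ univ.filter (fun k : Fin n => k.val < m), g k := by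
  refine Finset.prod_bij' (fun (k : Fin m) _ => (⟨k.val, lt_of_lt_of_le k.isLt hmn⟩ : Fin n))
    (fun k hk => (⟨k.val, by simpa using hk⟩ : Fin m)) ?_ ?_ ?_ ?_ ?_
  · intro k _; simp [k.isLt]
  · intro k hk; simp
  · intro k _; rfl
  · intro k hk; rfl
  · intro k _; exact hfg k

private lemma extendsHist_iff {O A : Type} {n : ℕ} (i : Fin n) (h : Hist O A i.val)
    (o : Fin n → O) (a : Fin n → A) :
    ExtendsHist i h o a ↔ h = histOf o a i := by
  constructor
  · rintro ⟨h1, h2⟩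
    refine Prod.ext ?_ ?_
    · funext k; exact (h1 k).symm
    · funext k; exact (h2 k).symm
  · rintro rfl; exact ⟨fun k => rfl, fun k => rfl⟩

set_option maxRecDepth 100000 in
private lemma expUtil_eq_sum_doVal {S A O : Type} [Fintype S] [Fintype A] [Fintype O]
    [DecidableEq O] [DecidableEq A] {n : ℕ} [NeZero n]
    (D : POMDP S A O n) (π π' τ : Policy O A n) (i : Fin n)
    (β : Hist O A i.val → A → ℝ)
    (hlt : ∀ (k : Fin n), k.val < i.val → ∀ h, τ k h = π' k h)
    (heq : ∀ h, τ i h = β h)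
    (hgt : ∀ (k : Fin n), i.val < k.val → ∀ h, τ k h = π k h) :
    expUtil D τ = ∑ h : Hist O A i.val,
      (∏ k : Fin i.val,
        π' ⟨k.val, lt_trans k.isLt i.isLt⟩ (truncHist i h k) (h.2 k)) *
        doVal D π i h (β h) := by
  simp only [doVal, Finset.mul_sum, mul_ite, mul_zero]
  rw [expUtil]
  conv_rhs => rw [Finset.sum_comm]
  refine Finset.sum_congr rfl fun s _ => ?_
  conv_rhs => rw [Finset.sum_comm]
  refine Finset.sum_congr rfl fun o _ => ?_
  conv_rhs => rw [Finset.sum_comm]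
  refine Finset.sum_congr rfl fun a _ => ?_
  simp only [extendsHist_iff]
  rw [Finset.sum_ite_eq' univ (histOf o a i)]
  simp only [mem_univ, if_true]
  have hset : (univ.filter (fun k : Fin n => k.val < i.val + 1)) =
      insert i (univ.filter fun k : Fin n => k.val < i.val) := by
    ext k; simp only [mem_filter, mem_univ, true_and, mem_insert, Fin.ext_iff]; omega
  have hnm : i ∉ univ.filter (fun k : Fin n => k.val < i.val) := by simp
  have hsplitU : (∏ k : Fin n, D.Ω (s k) (o k) * τ k (histOf o a k) (a k)) =
      (∏ k ∈ univ.filter (fun k : Fin n => i < k),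
        D.Ω (s k) (o k) * τ k (histOf o a k) (a k)) *
      ∏ k ∈ univ.filter (fun k : Fin n => ¬ i < k),
        D.Ω (s k) (o k) * τ k (histOf o a k) (a k) :=
    (Finset.prod_filter_mul_prod_filter_not univ _ _).symm
  have hgt' : (∏ k ∈ univ.filter (fun k : Fin n => i < k),
        D.Ω (s k) (o k) * τ k (histOf o a k) (a k))
      = ∏ k ∈ univ.filter (fun k : Fin n => i < k),
        D.Ω (s k) (o k) * π k (histOf o a k) (a k) :=
    Finset.prod_congr rfl fun k hk => by
      rw [hgt k (Finset.mem_filter.mp hk).2]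
  have hset' : univ.filter (fun k : Fin n => ¬ i < k) =
      insert i (univ.filter fun k : Fin n => k.val < i.val) := by
    ext k
    simp only [mem_filter, mem_univ, true_and, mem_insert, Fin.ext_iff, Fin.lt_def, not_lt]
    omega
  have hlt' : (∏ k ∈ univ.filter (fun k : Fin n => k.val < i.val),
        D.Ω (s k) (o k) * τ k (histOf o a k) (a k))
      = (∏ k ∈ univ.filter (fun k : Fin n => k.val < i.val), D.Ω (s k) (o k)) *
        ∏ k ∈ univ.filter (fun k : Fin n => k.val < i.val), π' k (histOf o a k) (a k) := by
    rw [← Finset.prod_mul_distrib]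
    exact Finset.prod_congr rfl fun k hk => by
      rw [hlt k (Finset.mem_filter.mp hk).2]
  have h4 : (∏ k : Fin i.val,
        π' ⟨k.val, lt_trans k.isLt i.isLt⟩ (truncHist i (histOf o a i) k)
          ((histOf o a i).2 k))
      = ∏ k ∈ univ.filter (fun k : Fin n => k.val < i.val), π' k (histOf o a k) (a k) :=
    prod_fin_cast (le_of_lt i.isLt) (fun k => π' k (histOf o a k) (a k)) _ (fun k => rfl)
  have h3 : (∏ k : Fin (i.val + 1),
        D.Ω (s ⟨k.val, lt_of_lt_of_le k.isLt i.isLt⟩)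
          (o ⟨k.val, lt_of_lt_of_le k.isLt i.isLt⟩))
      = D.Ω (s i) (o i) * ∏ k ∈ univ.filter (fun k : Fin n => k.val < i.val),
          D.Ω (s k) (o k) := by
    rw [prod_fin_cast i.isLt (fun k => D.Ω (s k) (o k)) _ (fun k => rfl), hset,
      Finset.prod_insert hnm]
  rw [trajProb, hsplitU, hgt', hset', Finset.prod_insert hnm]
  rw [heq, hlt', h4, h3]
  ring

end Aux

/-- Pareto-optimal control theorem, sufficiency: if `w1, w2 > 0` with `w1 + w2 = 1` and the
full-memory policy `π` is such that at every time `i` and every history `hᵢ` the action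
distribution `πᵢ(−|hᵢ)` maximizes `α ↦ w1·W_{D1}^π(α,hᵢ) + w2·W_{D2}^π(α,hᵢ)` over all
action distributions `α`, then `π` is Pareto-optimal for `(D1, D2)`. -/
theorem paretoOptimal_control_sufficiency
    {S1 S2 A O : Type} [Fintype S1] [Fintype S2] [Fintype A] [Fintype O]
    [DecidableEq O] [DecidableEq A]
    [Nonempty S1] [Nonempty S2] [Nonempty A] [Nonempty O] {n : ℕ} [NeZero n]
    (D1 : POMDP S1 A O n) (D2 : POMDP S2 A O n) (hD1 : D1.Valid) (hD2 : D2.Valid)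
    (w1 w2 : ℝ) (hw1 : 0 < w1) (hw2 : 0 < w2) (hw : w1 + w2 = 1)
    (π : Policy O A n) (hπ : IsPolicy π)
    (hmax : ∀ (i : Fin n) (h : Hist O A i.val) (α : A → ℝ), IsDist α →
      w1 * doVal D1 π i h α + w2 * doVal D2 π i h α ≤
        w1 * doVal D1 π i h (π i h) + w2 * doVal D2 π i h (π i h)) :
    ParetoOptimal D1 D2 π := by
  intro π' hπ'
  set hyb : ℕ → Policy O A n := fun m k h => if k.val < m then π' k h else π k h with hhyb
  have h0 : ∀ (k : Fin n) (h : Hist O A k.val), hyb 0 k h = π k h := by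
    intro k h; simp [hhyb]
  have hnn : ∀ (k : Fin n) (h : Hist O A k.val), hyb n k h = π' k h := by
    intro k h; simp [hhyb, k.isLt]
  have e0 : ∀ {S : Type} [Fintype S] (D : POMDP S A O n) (τ τ' : Policy O A n),
      (∀ (k : Fin n) (h : Hist O A k.val), τ k h = τ' k h) → expUtil D τ = expUtil D τ' := by
    intro S _ D τ τ' he
    have : τ = τ' := by
      funext k h; exact he k h
    rw [this]
  have step : ∀ m, m < n →
      w1 * expUtil D1 (hyb (m + 1)) + w2 * expUtil D2 (hyb (m + 1)) ≤
        w1 * expUtil D1 (hyb m) + w2 * expUtil D2 (hyb m) := by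
    intro m hm
    set i : Fin n := ⟨m, hm⟩ with hi
    have hlt1 : ∀ (k : Fin n), k.val < i.val → ∀ h, hyb (m + 1) k h = π' k h := by
      intro k hk h
      have hk' : (k : ℕ) < m := hk
      simp only [hhyb]; exact if_pos (by omega)
    have hlt2 : ∀ (k : Fin n), k.val < i.val → ∀ h, hyb m k h = π' k h := by
      intro k hk h
      have hk' : (k : ℕ) < m := hk
      simp only [hhyb]; exact if_pos hk'
    have hgt1 : ∀ (k : Fin n), i.val < k.val → ∀ h, hyb (m + 1) k h = π k h := by
      intro k hk h
      have hk' : m < (k : ℕ) := hk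
      simp only [hhyb]; exact if_neg (by omega)
    have hgt2 : ∀ (k : Fin n), i.val < k.val → ∀ h, hyb m k h = π k h := by
      intro k hk h
      have hk' : m < (k : ℕ) := hk
      simp only [hhyb]; exact if_neg (by omega)
    have heq1 : ∀ h, hyb (m + 1) i h = π' i h := by
      intro h
      simp only [hhyb]; exact if_pos (show (i : ℕ) < m + 1 from Nat.lt_succ_self m)
    have heq2 : ∀ h, hyb m i h = π i h := by
      intro h
      simp only [hhyb]; exact if_neg (show ¬ (i : ℕ) < m from lt_irrefl m)
    rw [expUtil_eq_sum_doVal D1 π π' (hyb (m + 1)) i (fun h => π' i h) hlt1 heq1 hgt1,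
      expUtil_eq_sum_doVal D2 π π' (hyb (m + 1)) i (fun h => π' i h) hlt1 heq1 hgt1,
      expUtil_eq_sum_doVal D1 π π' (hyb m) i (fun h => π i h) hlt2 heq2 hgt2,
      expUtil_eq_sum_doVal D2 π π' (hyb m) i (fun h => π i h) hlt2 heq2 hgt2,
      Finset.mul_sum, Finset.mul_sum, Finset.mul_sum, Finset.mul_sum,
      ← Finset.sum_add_distrib, ← Finset.sum_add_distrib]
    refine Finset.sum_le_sum fun h _ => ?_
    have hC : 0 ≤ ∏ k : Fin i.val,
        π' ⟨k.val, lt_trans k.isLt i.isLt⟩ (truncHist i h k) (h.2 k) :=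
      Finset.prod_nonneg fun k _ => (hπ' _ _).1 _
    have := hmax i h (π' i h) (hπ' i h)
    nlinarith [mul_le_mul_of_nonneg_left this hC]
  have mono : ∀ m, m ≤ n →
      w1 * expUtil D1 (hyb m) + w2 * expUtil D2 (hyb m) ≤
        w1 * expUtil D1 (hyb 0) + w2 * expUtil D2 (hyb 0) := by
    intro m
    induction m with
    | zero => intro _; exact le_rfl
    | succ m ih => intro hm; exact (step m (by omega)).trans (ih (by omega))
  have key : w1 * expUtil D1 π' + w2 * expUtil D2 π' ≤
      w1 * expUtil D1 π + w2 * expUtil D2 π := by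
    have := mono n le_rfl
    rwa [e0 D1 (hyb n) π' hnn, e0 D2 (hyb n) π' hnn, e0 D1 (hyb 0) π h0,
      e0 D2 (hyb 0) π h0] at this
  constructor
  · intro h1
    right; nlinarith
  · intro h2
    left; nlinarith
end
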